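/- A permutation σ satisfies: s(σ) avoids both 231 and 321 if and only if σ avoids all three patterns 2341, 3241, and 45231. That is, s^{-1}(Av(231,321)) = Av(2341, 3241, 45231). -/

import Mathlib

/-!
Let `c < x` be entries of a permutation `σ = L m R` with maximum `m`, so that
`s(σ) = s(L) s(R) m`. Then `x` precedes `c` in `s(σ)` iff either both lie in `L` (or both in `R`)
and `x` precedes `c` in `s(L)` (in `s(R)`), or `x ∈ L` and `c ∈ R`. By induction, `x` precedes `c`
in `s(σ)` iff some entry larger than `x` lies between `x` and `c` in `σ`.

Hence `s(σ)` contains 231 or 321, i.e. some entry `c` of `s(σ)` is preceded by two larger entries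
`a ≠ b`, iff `σ` has subsequences `a y c` and `b z c` with `c < a < y` and `c < b < z`. Say `a`
comes first. If `a < z`, then `a b z c` is a 2341 or 3241. Otherwise `b < z < a < y`, and according
to where `y` sits relative to `b` and `z`, one of `a y b z c` (a 45231), `a b y c` and `a z y c`
(a 2341 or 3241) occurs. Conversely, each of the three patterns contains such a configuration.
-/

/-- West's stack-sorting map, implemented with fuel (fuel = length suffices). -/
def ssAux : ℕ → List ℕ → List ℕ
  | 0, _ => []
  | _ + 1, [] => []
  | fuel + 1, l =>
    let m := l.foldr max 0
    let i := l.idxOf m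
    ssAux fuel (l.take i) ++ ssAux fuel (l.drop (i + 1)) ++ [m]

/-- West's stack-sorting map `s`. -/
def stackSort (l : List ℕ) : List ℕ := ssAux l.length l

/-- `σ` contains the classical pattern `τ`. -/
def Contains (τ σ : List ℕ) : Prop :=
  ∃ f : Fin τ.length → Fin σ.length, StrictMono f ∧
    ∀ i j : Fin τ.length, τ.get i < τ.get j ↔ σ.get (f i) < σ.get (f j)

/-- `σ` avoids the classical pattern `τ`. -/
def Avoids (σ τ : List ℕ) : Prop := ¬ Contains τ σ

open List

section Sublist

variable {α : Type*}

theorem pair_sublist_append_iff {a b : α} {A B : List α} :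
    [a, b] <+ A ++ B ↔ [a, b] <+ A ∨ (a ∈ A ∧ b ∈ B) ∨ [a, b] <+ B := by
  rw [sublist_append_iff]
  constructor
  · rintro ⟨_ | ⟨x, _ | ⟨y, _ | ⟨z, t⟩⟩⟩, l₂, ⟨⟩, h₁, h₂⟩ <;> simp_all
  · rintro (h | ⟨ha, hb⟩ | h)
    · exact ⟨[a, b], [], by simp, h, nil_sublist _⟩
    · exact ⟨[a], [b], rfl, singleton_sublist.2 ha, singleton_sublist.2 hb⟩
    · exact ⟨[], [a, b], rfl, nil_sublist _, h⟩

theorem triple_sublist_append_iff {a b c : α} {A B : List α} :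
    [a, b, c] <+ A ++ B ↔
      [a, b, c] <+ A ∨ ([a, b] <+ A ∧ c ∈ B) ∨ (a ∈ A ∧ [b, c] <+ B) ∨ [a, b, c] <+ B := by
  rw [sublist_append_iff]
  constructor
  · rintro ⟨_ | ⟨x, _ | ⟨y, _ | ⟨z, _ | ⟨w, t⟩⟩⟩⟩, l₂, ⟨⟩, h₁, h₂⟩ <;> simp_all
  · rintro (h | ⟨ha, hb⟩ | ⟨ha, hb⟩ | h)
    · exact ⟨[a, b, c], [], by simp, h, nil_sublist _⟩
    · exact ⟨[a, b], [c], rfl, ha, singleton_sublist.2 hb⟩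
    · exact ⟨[a], [b, c], rfl, singleton_sublist.2 ha, hb⟩
    · exact ⟨[], [a, b, c], rfl, nil_sublist _, h⟩

/- Stated with three leading entries so that it can serve as a `simp` lemma: the same statement
for `a :: b :: t` would loop on `[a, b]`. -/
theorem cons_cons_cons_sublist_iff {l : List α} (hl : l.Nodup) {a b c : α} {t : List α} :
    a :: b :: c :: t <+ l ↔ [a, b] <+ l ∧ b :: c :: t <+ l := by
  constructor
  · intro h
    exact ⟨(by simp : [a, b] <+ a :: b :: c :: t).trans h, (sublist_cons_self a _).trans h⟩
  rintro ⟨hab, hbt⟩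
  induction l with
  | nil => simp at hbt
  | cons z r ih =>
    obtain ⟨hz, hr⟩ := nodup_cons.1 hl
    have hbt' (hb : b ∈ r) : b :: c :: t <+ r := by
      rcases sublist_cons_iff.1 hbt with h | ⟨_, ⟨⟩, _⟩
      exacts [h, absurd hb hz]
    rcases sublist_cons_iff.1 hab with hab | ⟨_, ⟨⟩, hb⟩
    · exact (ih hr hab (hbt' (hab.subset (by simp)))).cons z
    · exact (hbt' (singleton_sublist.1 hb)).cons_cons _

theorem pair_sublist_iff_idxOf_lt [BEq α] [LawfulBEq α] {l : List α} (hl : l.Nodup) {a b : α} :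
    [a, b] <+ l ↔ a ∈ l ∧ b ∈ l ∧ l.idxOf a < l.idxOf b := by
  induction l with
  | nil => simp
  | cons z t ih =>
    obtain ⟨hz, ht⟩ := nodup_cons.1 hl
    rcases eq_or_ne a z with rfl | ha
    · have hab : ¬[a, b] <+ t := fun h => hz (h.subset mem_cons_self)
      rcases eq_or_ne b a with rfl | hb
      · simp [sublist_cons_iff, hab, hz]
      · simp [sublist_cons_iff, hab, hb, hb.symm]
    · have hsub : [a, b] <+ z :: t ↔ [a, b] <+ t := by simp [sublist_cons_iff, ha]
      rcases eq_or_ne b z with rfl | hb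
      · rw [hsub, idxOf_cons_self]
        exact iff_of_false (fun h => hz (h.subset (by simp))) fun h => Nat.not_lt_zero _ h.2.2
      · simp [hsub, ih ht, ha, hb, ha.symm, hb.symm]

end Sublist

theorem foldr_max_mem {l : List ℕ} (hl : l ≠ []) : l.foldr max 0 ∈ l :=
  maximum_mem (foldr_max_of_ne_nil hl).symm

theorem foldr_max_eq_of_forall_le {l : List ℕ} {m : ℕ} (hm : m ∈ l) (hle : ∀ x ∈ l, x ≤ m) :
    l.foldr max 0 = m :=
  le_antisymm (max_le_of_forall_le l m hle) (le_max_of_le hm le_rfl)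

theorem exists_eq_append_cons_max {l : List ℕ} (hl : l.Nodup) (hne : l ≠ []) :
    ∃ L m R, l = L ++ m :: R ∧ ∀ x ∈ L ++ R, x < m := by
  obtain ⟨m, hm, hmax⟩ : ∃ m ∈ l, ∀ x ∈ l, x ≤ m :=
    ⟨_, foldr_max_mem hne, fun x hx => le_max_of_le hx le_rfl⟩
  obtain ⟨L, R, rfl⟩ := append_of_mem hm
  refine ⟨L, m, R, rfl, fun x hx => (hmax x ?_).lt_of_ne ?_⟩
  · exact mem_append.2 ((mem_append.1 hx).imp id (mem_cons_of_mem m))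
  · rintro rfl
    exact (nodup_cons.1 (nodup_middle.1 hl)).1 hx

theorem nodup_induction_on_max {P : List ℕ → Prop} (nil : P [])
    (append_cons : ∀ L m R, (∀ x ∈ L, x < m) → (∀ x ∈ R, x < m) → L.Nodup → R.Nodup →
      P L → P R → P (L ++ m :: R))
    (l : List ℕ) (hl : l.Nodup) : P l := by
  rcases eq_or_ne l [] with rfl | hne
  · exact nil
  obtain ⟨L, m, R, rfl, hlt⟩ := exists_eq_append_cons_max hl hne
  have : L.length < (L ++ m :: R).length ∧ R.length < (L ++ m :: R).length := by
    simp only [length_append, length_cons]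
    omega
  have hL : L.Nodup := hl.sublist (sublist_append_left _ _)
  have hR : R.Nodup := hl.sublist ((sublist_cons_self m R).trans (sublist_append_right L _))
  exact append_cons L m R (fun x hx => hlt x (mem_append_left R hx))
    (fun x hx => hlt x (mem_append_right L hx)) hL hR
    (nodup_induction_on_max nil append_cons L hL) (nodup_induction_on_max nil append_cons R hR)
termination_by l.length

theorem ssAux_eq_of_length_le :
    ∀ {fuel fuel' : ℕ} {l : List ℕ}, l.length ≤ fuel → l.length ≤ fuel' →
      ssAux fuel l = ssAux fuel' l
  | 0, 0, _, _, _ => rfl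
  | 0, _ + 1, [], _, _ | _ + 1, 0, [], _, _ | _ + 1, _ + 1, [], _, _ => rfl
  | fuel + 1, fuel' + 1, a :: t, h, h' => by
    have hi : (a :: t).idxOf ((a :: t).foldr max 0) < t.length + 1 :=
      idxOf_lt_length_of_mem (foldr_max_mem (cons_ne_nil a t))
    simp only [length_cons] at h h'
    dsimp only [ssAux]
    generalize (a :: t).idxOf ((a :: t).foldr max 0) = i at hi ⊢
    congr 2 <;> apply ssAux_eq_of_length_le <;>
      simp only [length_take, length_drop, length_cons] <;> omega

theorem stackSort_nil : stackSort [] = [] := rfl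

theorem stackSort_append_cons {L R : List ℕ} {m : ℕ} (hL : ∀ x ∈ L, x < m)
    (hR : ∀ x ∈ R, x ≤ m) :
    stackSort (L ++ m :: R) = stackSort L ++ stackSort R ++ [m] := by
  have hmax : (L ++ m :: R).foldr max 0 = m :=
    foldr_max_eq_of_forall_le (by simp) fun x hx => by
      rcases mem_append.1 hx with hx | hx
      · exact (hL x hx).le
      · rcases mem_cons.1 hx with rfl | hx
        exacts [le_rfl, hR x hx]
  have hidx : (L ++ m :: R).idxOf m = L.length := by
    rw [idxOf_append, if_neg fun h => (hL m h).false, idxOf_cons_self, zero_add]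
  have hlen : (L ++ m :: R).length = L.length + R.length + 1 := by
    rw [length_append, length_cons]
    omega
  have hdrop : (L ++ m :: R).drop (L.length + 1) = R := by simp
  rw [stackSort, hlen, ssAux.eq_3 _ _ (by simp), hmax, hidx, take_left, hdrop, stackSort,
    stackSort, ssAux_eq_of_length_le (l := L) (fuel' := L.length) (by omega) le_rfl,
    ssAux_eq_of_length_le (l := R) (fuel' := R.length) (by omega) le_rfl]

theorem stackSort_perm {l : List ℕ} (hl : l.Nodup) : stackSort l ~ l := by
  refine nodup_induction_on_max (P := fun l => stackSort l ~ l) (Perm.refl _)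
    (fun L m R hL hR _ _ ihL ihR => ?_) l hl
  rw [stackSort_append_cons hL fun x hx => (hR x hx).le]
  exact ((ihL.append ihR).append_right _).trans
    ((perm_append_singleton _ _).trans perm_middle.symm)

theorem exists_gt_between_append_cons_iff {L R : List ℕ} {m x c : ℕ} (hL : ∀ y ∈ L, y < m)
    (hR : ∀ y ∈ R, y ≤ m) (hcx : c < x) :
    (∃ y, x < y ∧ [x, y, c] <+ L ++ m :: R) ↔
      (∃ y, x < y ∧ [x, y, c] <+ L) ∨ (x ∈ L ∧ c ∈ R) ∨ (∃ y, x < y ∧ [x, y, c] <+ R) := by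
  have hle : ∀ y ∈ L ++ m :: R, y ≤ m := by
    simp only [mem_append, mem_cons]
    rintro y (hy | rfl | hy)
    exacts [(hL y hy).le, le_rfl, hR y hy]
  constructor
  · rintro ⟨y, hxy, h⟩
    have hcm : c ≠ m := (hcx.trans_le (hle x (h.subset mem_cons_self))).ne
    have hcR {l : List ℕ} (hl : c :: l <+ m :: R) : c ∈ R :=
      (mem_cons.1 (hl.subset mem_cons_self)).resolve_left hcm
    rcases triple_sublist_append_iff.1 h with h | ⟨h, hc⟩ | ⟨hx, h⟩ | h
    · exact .inl ⟨y, hxy, h⟩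
    · exact .inr (.inl ⟨h.subset mem_cons_self, hcR (singleton_sublist.2 hc)⟩)
    · exact .inr (.inl ⟨hx, hcR ((sublist_cons_self y [c]).trans h)⟩)
    · rcases sublist_cons_iff.1 h with h | ⟨r, ⟨⟩, h⟩
      · exact .inr (.inr ⟨y, hxy, h⟩)
      · have hy : y ∈ L ++ m :: R := mem_append_right L (mem_cons_of_mem m (h.subset mem_cons_self))
        exact absurd (hle y hy) hxy.not_ge
  · rintro (⟨y, hxy, h⟩ | ⟨hx, hc⟩ | ⟨y, hxy, h⟩)
    · exact ⟨y, hxy, h.trans (sublist_append_left L _)⟩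
    · exact ⟨m, hL x hx,
        (singleton_sublist.2 hx).append (cons_sublist_cons.2 (singleton_sublist.2 hc))⟩
    · exact ⟨y, hxy, (h.trans (sublist_cons_self m R)).trans (sublist_append_right L _)⟩

theorem pair_sublist_stackSort_iff {l : List ℕ} (hl : l.Nodup) {x c : ℕ} (hcx : c < x) :
    [x, c] <+ stackSort l ↔ ∃ y, x < y ∧ [x, y, c] <+ l := by
  refine nodup_induction_on_max
    (P := fun l => ∀ {x c}, c < x → ([x, c] <+ stackSort l ↔ ∃ y, x < y ∧ [x, y, c] <+ l))
    (by simp [stackSort_nil]) (fun L m R hL hR ndL ndR ihL ihR x c hcx => ?_) l hl hcx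
  have hLR : ∀ y ∈ stackSort L ++ stackSort R, y < m := by
    simp only [mem_append, (stackSort_perm ndL).mem_iff, (stackSort_perm ndR).mem_iff]
    rintro y (hy | hy)
    exacts [hL y hy, hR y hy]
  have hdrop : [x, c] <+ stackSort L ++ stackSort R ++ [m] ↔
      [x, c] <+ stackSort L ++ stackSort R := by
    refine ⟨fun h => ?_, fun h => h.trans (sublist_append_left _ _)⟩
    rcases pair_sublist_append_iff.1 h with h | ⟨hx, hc⟩ | h
    · exact h
    · rw [mem_singleton] at hc
      subst hc
      exact absurd hcx (hLR x hx).asymm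
    · exact absurd h.length_le (by simp)
  rw [stackSort_append_cons hL fun x hx => (hR x hx).le, hdrop, pair_sublist_append_iff,
    exists_gt_between_append_cons_iff hL (fun x hx => (hR x hx).le) hcx, ihL hcx, ihR hcx,
    (stackSort_perm ndL).mem_iff, (stackSort_perm ndR).mem_iff]

theorem contains_iff_exists_ofFn_sublist {τ σ : List ℕ} :
    Contains τ σ ↔
      ∃ f : Fin τ.length → ℕ, ofFn f <+ σ ∧ ∀ i j, τ.get i < τ.get j ↔ f i < f j := by
  constructor
  · rintro ⟨g, hg, hτ⟩
    refine ⟨fun i => σ.get (g i), ?_, hτ⟩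
    have := map_getElem_sublist (l := σ) (is := ofFn g) (pairwise_ofFn.2 fun _ _ h => hg h)
    simpa [map_ofFn, Function.comp_def] using this
  · rintro ⟨f, hf, hτ⟩
    obtain ⟨e, he⟩ := sublist_iff_exists_fin_orderEmbedding_get_eq.1 hf
    refine ⟨fun i => e (Fin.cast length_ofFn.symm i),
      fun i j hij => e.strictMono (by simpa using hij), fun i j => ?_⟩
    simp only [← he, get_ofFn, hτ]
    rfl

theorem contains_231_or_321_iff_sublist {σ : List ℕ} :
    (Contains [2, 3, 1] σ ∨ Contains [3, 2, 1] σ) ↔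
      ∃ a b c, [a, b, c] <+ σ ∧ a ≠ b ∧ c < a ∧ c < b := by
  simp [contains_iff_exists_ofFn_sublist, Fin.exists_fin_succ_pi, Fin.forall_fin_succ]
  constructor
  · rintro (⟨a, b, c, h, hs⟩ | ⟨a, b, c, h, hs⟩) <;> exact ⟨a, b, c, h, by omega⟩
  · rintro ⟨a, b, c, h, hab, hs⟩
    rcases lt_or_gt_of_ne hab with hab | hab
    · exact .inl ⟨a, b, c, h, by omega⟩
    · exact .inr ⟨a, b, c, h, by omega⟩

theorem contains_2341_or_3241_iff_sublist {σ : List ℕ} :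
    (Contains [2, 3, 4, 1] σ ∨ Contains [3, 2, 4, 1] σ) ↔
      ∃ a b d c, [a, b, d, c] <+ σ ∧ a ≠ b ∧ c < a ∧ c < b ∧ a < d ∧ b < d := by
  simp [contains_iff_exists_ofFn_sublist, Fin.exists_fin_succ_pi, Fin.forall_fin_succ]
  constructor
  · rintro (⟨a, b, d, c, h, hs⟩ | ⟨a, b, d, c, h, hs⟩) <;> exact ⟨a, b, d, c, h, by omega⟩
  · rintro ⟨a, b, d, c, h, hab, hs⟩
    rcases lt_or_gt_of_ne hab with hab | hab
    · exact .inl ⟨a, b, d, c, h, by omega⟩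
    · exact .inr ⟨a, b, d, c, h, by omega⟩

theorem contains_45231_iff_sublist {σ : List ℕ} :
    Contains [4, 5, 2, 3, 1] σ ↔
      ∃ a b c d e, [a, b, c, d, e] <+ σ ∧ e < c ∧ c < d ∧ d < a ∧ a < b := by
  simp [contains_iff_exists_ofFn_sublist, Fin.exists_fin_succ_pi, Fin.forall_fin_succ]
  constructor <;> rintro ⟨a, b, c, d, e, h, hs⟩ <;> exact ⟨a, b, c, d, e, h, by omega⟩

theorem contains_231_or_321_iff_of_nodup {s : List ℕ} (hs : s.Nodup) :
    (Contains [2, 3, 1] s ∨ Contains [3, 2, 1] s) ↔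
      ∃ a b c, a ≠ b ∧ c < a ∧ c < b ∧ [a, c] <+ s ∧ [b, c] <+ s := by
  rw [contains_231_or_321_iff_sublist]
  constructor
  · rintro ⟨a, b, c, h, hab, hca, hcb⟩
    exact ⟨a, b, c, hab, hca, hcb, (by simp : [a, c] <+ [a, b, c]).trans h,
      (by simp : [b, c] <+ [a, b, c]).trans h⟩
  · rintro ⟨a, b, c, hab, hca, hcb, hac, hbc⟩
    rw [pair_sublist_iff_idxOf_lt hs] at hac hbc
    have hne : s.idxOf a ≠ s.idxOf b := fun h => hab ((idxOf_inj hac.1).1 h)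
    simp only [cons_cons_cons_sublist_iff hs, pair_sublist_iff_idxOf_lt hs]
    rcases hne.lt_or_gt with h | h
    · exact ⟨a, b, c, ⟨⟨hac.1, hbc.1, h⟩, hbc⟩, hab, hca, hcb⟩
    · exact ⟨b, a, c, ⟨⟨hbc.1, hac.1, h⟩, hac⟩, hab.symm, hcb, hca⟩

theorem contains_2341_or_3241_or_45231_of_sublists {σ : List ℕ} (hσ : σ.Nodup)
    {a b c y z : ℕ} (hca : c < a) (hcb : c < b) (hay : a < y) (hbz : b < z)
    (hayc : [a, y, c] <+ σ) (hbzc : [b, z, c] <+ σ) (hab : [a, b] <+ σ) :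
    Contains [2, 3, 4, 1] σ ∨ Contains [3, 2, 4, 1] σ ∨ Contains [4, 5, 2, 3, 1] σ := by
  rw [← or_assoc, contains_2341_or_3241_iff_sublist, contains_45231_iff_sublist]
  simp only [cons_cons_cons_sublist_iff hσ, pair_sublist_iff_idxOf_lt hσ] at hayc hbzc hab ⊢
  obtain ⟨⟨ha, hy, hiay⟩, -, hc, hiyc⟩ := hayc
  obtain ⟨⟨hb, hz, hibz⟩, -, -, hizc⟩ := hbzc
  obtain ⟨-, -, hiab⟩ := hab
  have hab : a ≠ b := by rintro rfl; omega
  rcases lt_trichotomy a z with haz | rfl | hza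
  · exact .inl ⟨a, b, z, c, ⟨⟨ha, hb, hiab⟩, ⟨hb, hz, hibz⟩, hz, hc, hizc⟩, hab, hca, hcb, haz, hbz⟩
  · omega
  have hiyz : σ.idxOf y ≠ σ.idxOf z := fun h => by have := (idxOf_inj hy).1 h; omega
  rcases hiyz.lt_or_gt with hiyz | hizy
  · have hiyb : σ.idxOf y ≠ σ.idxOf b := fun h => by have := (idxOf_inj hy).1 h; omega
    rcases hiyb.lt_or_gt with hiyb | hiby
    · exact .inr ⟨a, y, b, z, c, ⟨⟨ha, hy, hiay⟩, ⟨hy, hb, hiyb⟩, ⟨hb, hz, hibz⟩, hz, hc, hizc⟩,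
        hcb, hbz, hza, hay⟩
    · exact .inl ⟨a, b, y, c, ⟨⟨ha, hb, hiab⟩, ⟨hb, hy, hiby⟩, hy, hc, hiyc⟩, hab, hca, hcb, hay,
        by omega⟩
  · exact .inl ⟨a, z, y, c, ⟨⟨ha, hz, by omega⟩, ⟨hz, hy, hizy⟩, hy, hc, hiyc⟩, by omega, hca,
      by omega, hay, by omega⟩

theorem contains_2341_or_3241_or_45231_iff_of_nodup {σ : List ℕ} (hσ : σ.Nodup) :
    (Contains [2, 3, 4, 1] σ ∨ Contains [3, 2, 4, 1] σ ∨ Contains [4, 5, 2, 3, 1] σ) ↔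
      ∃ a b c, a ≠ b ∧ c < a ∧ c < b ∧ (∃ y, a < y ∧ [a, y, c] <+ σ) ∧
        ∃ z, b < z ∧ [b, z, c] <+ σ := by
  constructor
  · rw [← or_assoc, contains_2341_or_3241_iff_sublist, contains_45231_iff_sublist]
    rintro (⟨a, b, d, c, h, hab, hca, hcb, had, hbd⟩ | ⟨a, b, c, d, e, h, hec, hcd, hda, hab⟩)
    · exact ⟨a, b, c, hab, hca, hcb, ⟨d, had, (by simp : [a, d, c] <+ [a, b, d, c]).trans h⟩,
        ⟨d, hbd, (by simp : [b, d, c] <+ [a, b, d, c]).trans h⟩⟩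
    · exact ⟨a, c, e, by omega, by omega, hec,
        ⟨b, hab, (by simp : [a, b, e] <+ [a, b, c, d, e]).trans h⟩,
        ⟨d, hcd, (by simp : [c, d, e] <+ [a, b, c, d, e]).trans h⟩⟩
  · rintro ⟨a, b, c, hab, hca, hcb, ⟨y, hay, hayc⟩, ⟨z, hbz, hbzc⟩⟩
    have ha : a ∈ σ := hayc.subset mem_cons_self
    have hb : b ∈ σ := hbzc.subset mem_cons_self
    have hne : σ.idxOf a ≠ σ.idxOf b := fun h => hab ((idxOf_inj ha).1 h)
    rcases hne.lt_or_gt with h | h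
    · exact contains_2341_or_3241_or_45231_of_sublists hσ hca hcb hay hbz hayc hbzc
        ((pair_sublist_iff_idxOf_lt hσ).2 ⟨ha, hb, h⟩)
    · exact contains_2341_or_3241_or_45231_of_sublists hσ hcb hca hbz hay hbzc hayc
        ((pair_sublist_iff_idxOf_lt hσ).2 ⟨hb, ha, h⟩)

/-- `s(σ)` avoids 231 and 321 iff `σ` avoids 2341, 3241 and 45231:
`s⁻¹(Av(231,321)) = Av(2341, 3241, 45231)`. -/
theorem stmt5 (n : ℕ) (σ : List ℕ) (hσ : σ.Perm (List.range' 1 n)) :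
    (Avoids (stackSort σ) [2, 3, 1] ∧ Avoids (stackSort σ) [3, 2, 1]) ↔
      Avoids σ [2, 3, 4, 1] ∧ Avoids σ [3, 2, 4, 1] ∧ Avoids σ [4, 5, 2, 3, 1] := by
  have hnd : σ.Nodup := hσ.nodup_iff.2 (nodup_range' ..)
  simp only [Avoids, ← not_or, not_iff_not]
  rw [contains_231_or_321_iff_of_nodup ((stackSort_perm hnd).nodup_iff.2 hnd),
    contains_2341_or_3241_or_45231_iff_of_nodup hnd]
  refine exists₃_congr fun a b c => and_congr_right fun _ => and_congr_right fun hca =>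
    and_congr_right fun hcb => ?_
  exact and_congr (pair_sublist_stackSort_iff hnd hca) (pair_sublist_stackSort_iff hnd hcb)
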